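/- For every integer n ≥ 2, the number of complete basis partitions of n with even signature equals the number of complete basis partitions of n with odd signature; in particular, b_c(n) is even for all n ≥ 2. -/

import Mathlib

open Finset
open scoped Classical

namespace BasisPartitions

/-! ### Ordinary partitions -/

/-- The parts of a partition, listed in weakly decreasing order. -/
def sparts {n : ℕ} (π : n.Partition) : List ℕ := π.parts.sort (· ≥ ·)

/-- `conj L j` is the number of parts that are `≥ j`, i.e. the `j`-th part of the
conjugate partition (for `j ≥ 1`). -/
def conj (L : List ℕ) (j : ℕ) : ℕ := L.countP (fun b => j ≤ b)

/-- The Durfee square size: the largest `k` such that the `k`-th part is `≥ k`. -/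
def durfee (L : List ℕ) : ℕ := (List.range L.length).countP (fun i => i + 1 ≤ L.getD i 0)

/-- The `(i+1)`-st successive rank `r_{i+1} = b_{i+1} - c_{i+1}` (0-indexed `i`). -/
def rank (L : List ℕ) (i : ℕ) : ℤ := (L.getD i 0 : ℤ) - (conj L (i + 1) : ℤ)

/-- The successive rank vector `(r_1, ..., r_k)` where `k` is the Durfee square size. -/
def ranks (L : List ℕ) : List ℤ := (List.range (durfee L)).map (rank L)

/-- A basis partition: the partitioned number is minimal among all partitions having
the same successive rank vector. -/
def IsBasis {n : ℕ} (π : n.Partition) : Prop :=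
  ∀ (m : ℕ) (π' : m.Partition), ranks (sparts π') = ranks (sparts π) → n ≤ m

/-- The signature: the number of distinct part sizes below the Durfee square. -/
def sig (L : List ℕ) : ℕ := ((L.drop (durfee L)).dedup).length

/-- `b(n;k)`: the number of basis partitions of `n` with Durfee square size `k`. -/
noncomputable def bCount (n k : ℕ) : ℕ :=
  Nat.card {π : n.Partition // IsBasis π ∧ durfee (sparts π) = k}

/-- `b(n,k,s)`: the number of basis partitions of `n` with Durfee square size `k`
and signature `s`. -/
noncomputable def bCount3 (n k s : ℕ) : ℕ :=
  Nat.card {π : n.Partition // IsBasis π ∧ durfee (sparts π) = k ∧ sig (sparts π) = s}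

/-- `B(n;j)`: the number of basis partitions of `n` with signature `j`. -/
noncomputable def BCount (n j : ℕ) : ℕ :=
  Nat.card {π : n.Partition // IsBasis π ∧ sig (sparts π) = j}

/-- Rogers–Ramanujan condition: exactly `k` parts, consecutive gaps `≥ 2`, last part `≥ 1`. -/
def RR (L : List ℕ) (k : ℕ) : Prop :=
  L.length = k ∧ (∀ i, i + 1 < k → L.getD (i + 1) 0 + 2 ≤ L.getD i 0) ∧ 1 ≤ L.getD (k - 1) 0

/-- `t(π)` for a Rogers–Ramanujan partition: the number of gaps `> 2`, plus 1 if the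
last part is `> 1`. -/
def tRR (L : List ℕ) (k : ℕ) : ℕ :=
  ((Finset.range (k - 1)).filter (fun i => L.getD (i + 1) 0 + 2 < L.getD i 0)).card +
    (if 1 < L.getD (k - 1) 0 then 1 else 0)

/-- Primary condition: exactly `k` parts, each part `≥ k`. -/
def Primary (L : List ℕ) (k : ℕ) : Prop := L.length = k ∧ ∀ x ∈ L, k ≤ x

/-- `t(π)` for a primary partition: the number of strict descents, plus 1 if the
last part is `> k`. -/
def tP (L : List ℕ) (k : ℕ) : ℕ :=
  ((Finset.range (k - 1)).filter (fun i => L.getD (i + 1) 0 < L.getD i 0)).card +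
    (if k < L.getD (k - 1) 0 then 1 else 0)

/-- A complete basis partition: every `j` with `1 ≤ j ≤ k-1` occurs as a part of `π_b`
(a row below the Durfee square) or as a part of `π_r` (a column length strictly to the
right of the Durfee square). -/
def IsComplete {n : ℕ} (π : n.Partition) : Prop :=
  ∀ j : ℕ, 1 ≤ j → j < durfee (sparts π) →
    j ∈ (sparts π).drop (durfee (sparts π)) ∨
      ∃ c : ℕ, durfee (sparts π) < c ∧ conj (sparts π) c = j

/-- `b_c(n)`: the number of complete basis partitions of `n`. -/
noncomputable def bc (n : ℕ) : ℕ := Nat.card {π : n.Partition // IsBasis π ∧ IsComplete π}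

/-! ### Partitions with non-repeating odd parts and their 2-modular graphs -/

/-- Partitions with non-repeating (distinct) odd parts. -/
def Pod {n : ℕ} (π : n.Partition) : Prop := ∀ x, Odd x → π.parts.count x ≤ 1

/-- The size (sum of entries) of the `c`-th column (1-indexed) of the 2-modular graph. -/
def mcolSize (L : List ℕ) (c : ℕ) : ℕ :=
  (L.map (fun x => if 2 * c ≤ x then 2 else if x = 2 * c - 1 then 1 else 0)).sum

/-- The length (number of entries) of the `c`-th column (1-indexed) of the 2-modular graph. -/
def mcolLen (L : List ℕ) (c : ℕ) : ℕ := L.countP (fun x => 2 * c - 1 ≤ x)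

/-- The number of entries in a row of the 2-modular graph recording the part `x`,
namely `⌈x/2⌉`. -/
def mrowLen (x : ℕ) : ℕ := (x + 1) / 2

/-- The 2-modular Durfee square size: the largest `k` with `⌈b_k/2⌉ ≥ k`. -/
def mdurfee (L : List ℕ) : ℕ := (List.range L.length).countP (fun i => 2 * i + 1 ≤ L.getD i 0)

/-- The `(i+1)`-st 2-modular successive rank: (size of row `i+1`) − (size of column `i+1`). -/
def mrank (L : List ℕ) (i : ℕ) : ℤ := (L.getD i 0 : ℤ) - (mcolSize L (i + 1) : ℤ)

/-- The 2-modular successive rank vector. -/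
def mranks (L : List ℕ) : List ℤ := (List.range (mdurfee L)).map (mrank L)

/-- A minimal basis partition in `P_{o,d}`: the partitioned number is minimal among all
partitions with non-repeating odd parts having the same 2-modular successive rank vector. -/
def MinBasis {n : ℕ} (μ : n.Partition) : Prop :=
  Pod μ ∧ ∀ (m : ℕ) (μ' : m.Partition), Pod μ' →
    mranks (sparts μ') = mranks (sparts μ) → n ≤ m

/-- A basis partition in `P_{o,d}`: no row of the 2-modular graph strictly below the Durfee
square has size equal to the size of a column strictly to the right of the Durfee square. -/
def PodBasis {n : ℕ} (π : n.Partition) : Prop :=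
  Pod π ∧ ∀ i, mdurfee (sparts π) ≤ i → i < (sparts π).length →
    ∀ c, mdurfee (sparts π) < c → mcolSize (sparts π) c ≠ (sparts π).getD i 0

/-- The signature of a basis partition in `P_{o,d}`: the number of distinct sizes among the
rows of the 2-modular graph strictly below the Durfee square. -/
def msig (L : List ℕ) : ℕ := ((L.drop (mdurfee L)).dedup).length

/-- The ℓ-signature: the number of distinct lengths among the rows of the 2-modular
graph strictly below the Durfee square. -/
def lsig (L : List ℕ) : ℕ := (((L.drop (mdurfee L)).map mrowLen).dedup).length

/-- `b(n;j)` for `P_{o,d}`: the number of basis partitions of `n` in `P_{o,d}` with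
signature `j`. -/
noncomputable def podB (n j : ℕ) : ℕ := Nat.card {π : n.Partition // PodBasis π ∧ msig (sparts π) = j}

/-- The number of odd parts. -/
def numOdd (L : List ℕ) : ℕ := L.countP (fun x => x % 2 = 1)

/-- A special partition: distinct parts with consecutive differences `≥ 4`, where a
difference equal to `4` is permitted only when both parts are even. -/
def Special (L : List ℕ) : Prop :=
  ∀ i, i + 1 < L.length →
    L.getD (i + 1) 0 + 4 ≤ L.getD i 0 ∧
      (L.getD i 0 = L.getD (i + 1) 0 + 4 → Even (L.getD i 0) ∧ Even (L.getD (i + 1) 0))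

/-- The `i`-th part of a special partition, with the convention that the part just after
the last one is `-2`. -/
def hpart (L : List ℕ) (i : ℕ) : ℤ := if i < L.length then (L.getD i 0 : ℤ) else -2

/-- `ℓ(π)`: the number of gaps `> 4` in a special partition, with the convention
`h_{k+1} = -2`. -/
def ell (L : List ℕ) : ℕ :=
  ((Finset.range L.length).filter (fun i => 4 < hpart L i - hpart L (i + 1))).card



/-!
A partition with Durfee square of size `k` is determined by `k`, the lengths
`m 0 ≥ ⋯ ≥ m (k-1)` of the rows to the right of the square and the lengths `l 0 ≥ ⋯ ≥ l (k-1)` of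
the columns below it. Its ranks are `m i - l i`, and with `m k = l k = 0` the part `i + 1` occurs
in `π_r` iff `m (i+1) < m i` and in `π_b` iff `l (i+1) < l i`. It is a basis partition iff no
index carries both drops (otherwise lowering `m` and `l` by one up to that index keeps the ranks
and shrinks the partition), so a complete basis partition has exactly one drop at every
`i < k - 1`, and also at `i = 0` once `n ≥ 2`. Exchanging the two first drops, i.e. the numbers of
parts `1` in `π_r` and in `π_b`, is therefore an involution on complete basis partitions of `n`
that changes the signature by one.
-/

theorem lt_countP_range_iff {p : ℕ → Bool} (hp : ∀ i j, i ≤ j → p j → p i) {N i : ℕ} :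
    i < (List.range N).countP p ↔ i < N ∧ p i := by
  induction N generalizing i with
  | zero => simp
  | succ N ih =>
    rw [List.range_succ, List.countP_append, List.countP_singleton]
    by_cases hN : p N
    · have hall : (List.range N).countP p = N :=
        (List.countP_eq_length.2 fun j hj => hp j N (List.mem_range.1 hj).le hN).trans
          List.length_range
      simp only [hall, hN, if_true]
      exact ⟨fun h => ⟨h, hp i N (by omega) hN⟩, fun h => h.1⟩
    · simp only [hN, ih, Bool.false_eq_true, if_false, add_zero]
      refine ⟨fun h => ⟨by omega, h.2⟩, fun ⟨hi, hpi⟩ => ⟨?_, hpi⟩⟩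
      rcases Nat.lt_succ_iff_lt_or_eq.1 hi with hi | rfl
      · exact hi
      · exact absurd hpi hN

theorem card_filter_range_succ (p : ℕ → Prop) [DecidablePred p] (k : ℕ) :
    ((Finset.range (k + 1)).filter p).card =
      ((Finset.range k).filter fun i => p (i + 1)).card + if p 0 then 1 else 0 := by
  simp only [Finset.card_filter, Finset.sum_range_succ']

section Counting

variable {α : Type*} (P : α → Prop) (s : α → ℕ)

theorem card_even_eq_card_odd_of_involution (f : α → α) (hP : ∀ a, P a → P (f a))
    (hf : ∀ a, P a → f (f a) = a) (hs : ∀ a, P a → Odd (s (f a) + s a)) :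
    Nat.card {a // P a ∧ Even (s a)} = Nat.card {a // P a ∧ Odd (s a)} := by
  have hodd : ∀ a, P a → Even (s a) → Odd (s (f a)) := fun a ha =>
    (Nat.odd_add.1 (hs a ha)).2
  have heven : ∀ a, P a → Odd (s a) → Even (s (f a)) := fun a ha =>
    (Nat.odd_add'.1 (hs a ha)).1
  exact Nat.card_congr
    { toFun a := ⟨f a, hP a a.2.1, hodd a a.2.1 a.2.2⟩
      invFun a := ⟨f a, hP a a.2.1, heven a a.2.1 a.2.2⟩
      left_inv a := Subtype.ext (hf a a.2.1)
      right_inv a := Subtype.ext (hf a a.2.1) }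

theorem card_eq_card_even_add_card_odd [Fintype α] :
    Nat.card {a // P a} = Nat.card {a // P a ∧ Even (s a)} + Nat.card {a // P a ∧ Odd (s a)} := by
  classical
  simp only [Nat.card_eq_fintype_card, Fintype.card_subtype, ← Finset.filter_filter,
    ← Nat.not_even_iff_odd]
  exact (Finset.card_filter_add_card_filter_not _).symm

end Counting

theorem conj_append (L₁ L₂ : List ℕ) (c : ℕ) : conj (L₁ ++ L₂) c = conj L₁ c + conj L₂ c :=
  List.countP_append

theorem conj_eq_length {L : List ℕ} {c : ℕ} (h : ∀ x ∈ L, c ≤ x) : conj L c = L.length :=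
  List.countP_eq_length.2 fun x hx => decide_eq_true (h x hx)

theorem conj_eq_zero {L : List ℕ} {c : ℕ} (h : ∀ x ∈ L, x < c) : conj L c = 0 :=
  List.countP_eq_zero.2 fun x hx => by simpa using h x hx

theorem count_eq_conj_sub_conj (L : List ℕ) (j : ℕ) :
    L.count j = conj L j - conj L (j + 1) := by
  suffices conj L j = L.count j + conj L (j + 1) by omega
  induction L with
  | nil => simp [conj]
  | cons a L ih =>
    simp only [conj, List.countP_cons, List.count_cons] at ih ⊢
    grind

section Sorted

variable {L : List ℕ}

theorem getD_le_getD (hs : L.Pairwise (· ≥ ·)) {i j : ℕ} (hij : i ≤ j) :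
    L.getD j 0 ≤ L.getD i 0 := by
  rcases Nat.lt_or_ge j L.length with hj | hj
  · rw [List.getD_eq_getElem _ _ hj, List.getD_eq_getElem _ _ (by omega)]
    rcases hij.lt_or_eq with hij | rfl
    · exact List.pairwise_iff_getElem.1 hs i j (by omega) hj hij
    · rfl
  · rw [List.getD_eq_default _ _ hj]
    exact Nat.zero_le _

theorem conj_antitone : Antitone (conj L) :=
  fun _ _ h => List.countP_mono_left fun x _ hx => by
    simp only [decide_eq_true_eq] at hx ⊢
    omega

theorem eq_of_conj_eq {L' : List ℕ} (hs : L.Pairwise (· ≥ ·)) (hs' : L'.Pairwise (· ≥ ·))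
    (hpos : ∀ x ∈ L, 0 < x) (hpos' : ∀ x ∈ L', 0 < x) (h : ∀ c, 0 < c → conj L c = conj L' c) :
    L = L' := by
  refine List.Perm.eq_of_pairwise' hs hs' (List.perm_iff_count.2 fun j => ?_)
  rcases Nat.eq_zero_or_pos j with rfl | hj
  · rw [List.count_eq_zero.2 fun h0 => (hpos 0 h0).false,
      List.count_eq_zero.2 fun h0 => (hpos' 0 h0).false]
  · rw [count_eq_conj_sub_conj, count_eq_conj_sub_conj, h j hj, h (j + 1) j.succ_pos]

variable (hs : L.Pairwise (· ≥ ·))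
include hs

theorem lt_durfee_iff {i : ℕ} : i < durfee L ↔ i + 1 ≤ L.getD i 0 := by
  have hp : ∀ i j, i ≤ j → decide (j + 1 ≤ L.getD j 0) → decide (i + 1 ≤ L.getD i 0) := by
    intro i j hij h
    have := getD_le_getD hs hij
    simp only [decide_eq_true_eq] at h ⊢
    omega
  rw [durfee, lt_countP_range_iff hp, decide_eq_true_eq, and_iff_right_iff_imp]
  intro h
  by_contra hl
  rw [List.getD_eq_default _ _ (by omega)] at h
  omega

theorem lt_conj_iff {c i : ℕ} (hc : 0 < c) : i < conj L c ↔ c ≤ L.getD i 0 := by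
  induction L generalizing i with
  | nil => simp only [conj, List.countP_nil, List.getD_nil, Nat.not_lt_zero, false_iff]; omega
  | cons a L ih =>
    have hsL := (List.pairwise_cons.1 hs).2
    have ha : ∀ x ∈ L, x ≤ a := (List.pairwise_cons.1 hs).1
    by_cases hca : c ≤ a
    · rcases i with _ | i
      · simp [conj, hca]
      · simp only [conj, List.countP_cons, hca, decide_true, if_true, List.getD_cons_succ] at ih ⊢
        rw [← ih hsL]
        omega
    · have h0 : conj L c = 0 := conj_eq_zero fun x hx => by have := ha x hx; omega
      have hle : (a :: L).getD i 0 ≤ a := getD_le_getD hs (Nat.zero_le i)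
      simp only [conj, List.countP_cons, hca, decide_false, Bool.false_eq_true, if_false,
        add_zero] at h0 ⊢
      rw [h0]
      omega

theorem durfee_le_getD {i : ℕ} (hi : i < durfee L) : durfee L ≤ L.getD i 0 := by
  have := (lt_durfee_iff hs).1 (show durfee L - 1 < durfee L by omega)
  have := getD_le_getD hs (show i ≤ durfee L - 1 by omega)
  omega

theorem getD_le_durfee {i : ℕ} (hi : durfee L ≤ i) : L.getD i 0 ≤ durfee L := by
  have := (lt_durfee_iff hs).not.1 (lt_irrefl _)
  have := getD_le_getD hs hi
  omega

theorem durfee_le_conj {c : ℕ} (hc : 0 < c) (hck : c ≤ durfee L) : durfee L ≤ conj L c := by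
  have := (lt_conj_iff hs hc (i := durfee L - 1)).2
    ((durfee_le_getD hs (by omega)).trans' hck)
  omega

theorem conj_le_durfee {c : ℕ} (hc : durfee L < c) : conj L c ≤ durfee L := by
  by_contra! h
  have := (lt_conj_iff hs (by omega)).1 h
  have := getD_le_durfee hs le_rfl
  omega

end Sorted

/-- In the Ferrers graph of `L`, `rightLen L i` is the length of row `i + 1` to the right of
the Durfee square and `belowLen L i` the length of column `i + 1` below it. -/
def rightLen (L : List ℕ) (i : ℕ) : ℕ := L.getD i 0 - durfee L

def belowLen (L : List ℕ) (i : ℕ) : ℕ := conj L (i + 1) - durfee L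

theorem belowLen_antitone (L : List ℕ) : Antitone (belowLen L) :=
  fun _ _ h => Nat.sub_le_sub_right (conj_antitone (Nat.succ_le_succ h)) _

section Coordinates

variable {L : List ℕ} (hs : L.Pairwise (· ≥ ·))
include hs

theorem rightLen_antitone : Antitone (rightLen L) :=
  fun _ _ h => Nat.sub_le_sub_right (getD_le_getD hs h) _

theorem rightLen_durfee : rightLen L (durfee L) = 0 :=
  Nat.sub_eq_zero_of_le (getD_le_durfee hs le_rfl)

theorem belowLen_durfee : belowLen L (durfee L) = 0 :=
  Nat.sub_eq_zero_of_le (conj_le_durfee hs (Nat.lt_succ_self _))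

theorem getD_eq_durfee_add_rightLen {i : ℕ} (hi : i < durfee L) :
    L.getD i 0 = durfee L + rightLen L i := by
  have := durfee_le_getD hs hi
  rw [rightLen]
  omega

theorem conj_eq_durfee_add_belowLen {i : ℕ} (hi : i < durfee L) :
    conj L (i + 1) = durfee L + belowLen L i := by
  have := durfee_le_conj hs (c := i + 1) (by omega) hi
  rw [belowLen]
  omega

theorem ranks_eq :
    ranks L = (List.range (durfee L)).map fun i => (rightLen L i : ℤ) - belowLen L i := by
  refine List.map_congr_left fun i hi => ?_
  have hi := List.mem_range.1 hi
  rw [rank, getD_eq_durfee_add_rightLen hs hi, conj_eq_durfee_add_belowLen hs hi]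
  push_cast
  ring

end Coordinates

/-- The parts of size at most `k` whose conjugate is `(l 0, …, l (k - 1))`: the part `j + 1`
occurs `l j - l (j + 1)` times. -/
def belowParts : ℕ → (ℕ → ℕ) → List ℕ
  | 0, _ => []
  | k + 1, l => List.replicate (l k - l (k + 1)) (k + 1) ++ belowParts k l

/-- The partition with Durfee square of size `k`, rows of lengths `m 0, …, m (k - 1)` to the
right of it and columns of lengths `l 0, …, l (k - 1)` below it. -/
def ofDurfeeData (k : ℕ) (m l : ℕ → ℕ) : List ℕ :=
  (List.range k).map (fun i => k + m i) ++ belowParts k l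

section Build

variable {k : ℕ} {m l : ℕ → ℕ}

theorem mem_belowParts {x : ℕ} (hx : x ∈ belowParts k l) : 0 < x ∧ x ≤ k := by
  induction k with
  | zero => simp [belowParts] at hx
  | succ k ih =>
    rcases List.mem_append.1 hx with hx | hx
    · rw [(List.mem_replicate.1 hx).2]
      omega
    · have := ih hx
      omega

theorem pairwise_belowParts : (belowParts k l).Pairwise (· ≥ ·) := by
  induction k with
  | zero => exact List.Pairwise.nil
  | succ k ih =>
    refine List.pairwise_append.2 ⟨List.pairwise_replicate.2 (Or.inr le_rfl), ih, ?_⟩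
    intro a ha b hb
    rw [(List.mem_replicate.1 ha).2]
    exact (mem_belowParts hb).2.trans k.le_succ

theorem succ_mem_belowParts_iff (hl : Antitone l) {i : ℕ} :
    i + 1 ∈ belowParts k l ↔ i < k ∧ l (i + 1) < l i := by
  induction k with
  | zero => simp [belowParts]
  | succ k ih =>
    rw [belowParts, List.mem_append, List.mem_replicate, ih]
    have := hl k.le_succ
    constructor
    · rintro (⟨hne, hik⟩ | ⟨hik, hlt⟩)
      · obtain rfl : i = k := by omega
        exact ⟨by omega, by omega⟩
      · exact ⟨by omega, hlt⟩
    · rintro ⟨hik, hlt⟩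
      rcases Nat.lt_succ_iff_lt_or_eq.1 hik with hik | rfl
      · exact Or.inr ⟨hik, hlt⟩
      · exact Or.inl ⟨by omega, rfl⟩

theorem conj_belowParts (hl : Antitone l) {c : ℕ} (hc : c ≤ k) :
    conj (belowParts k l) (c + 1) = l c - l k := by
  induction k with
  | zero =>
    obtain rfl : c = 0 := by omega
    simp [belowParts, conj]
  | succ k ih =>
    have hk : l (k + 1) ≤ l k := hl k.le_succ
    rw [belowParts, conj_append, conj, List.countP_replicate]
    rcases Nat.lt_or_ge c (k + 1) with hc' | hc'
    · have := hl (Nat.le_of_lt_succ hc')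
      rw [ih (by omega), if_pos (by simpa using hc')]
      omega
    · obtain rfl : c = k + 1 := by omega
      rw [conj_eq_zero fun x hx => by have := (mem_belowParts hx).2; omega]
      simp

theorem sum_belowParts (hl : Antitone l) :
    (belowParts k l).sum + k * l k = ∑ i ∈ Finset.range k, l i := by
  induction k with
  | zero => simp [belowParts]
  | succ k ih =>
    rw [belowParts, List.sum_append, List.sum_replicate, smul_eq_mul, Finset.sum_range_succ, ← ih]
    have := hl k.le_succ
    zify [this]
    ring

theorem pos_of_mem_ofDurfeeData {x : ℕ} (hx : x ∈ ofDurfeeData k m l) : 0 < x := by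
  rcases List.mem_append.1 hx with hx | hx
  · obtain ⟨i, hi, rfl⟩ := List.mem_map.1 hx
    have := List.mem_range.1 hi
    omega
  · exact (mem_belowParts hx).1

theorem pairwise_ofDurfeeData (hm : Antitone m) : (ofDurfeeData k m l).Pairwise (· ≥ ·) := by
  refine List.pairwise_append.2 ⟨?_, pairwise_belowParts, ?_⟩
  · exact List.pairwise_map.2 (List.pairwise_lt_range.imp fun h => by have := hm h.le; omega)
  · intro a ha b hb
    obtain ⟨i, -, rfl⟩ := List.mem_map.1 ha
    have := (mem_belowParts hb).2
    omega

theorem getD_ofDurfeeData {i : ℕ} (hi : i < k) : (ofDurfeeData k m l).getD i 0 = k + m i := by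
  rw [ofDurfeeData, List.getD_append _ _ _ _ (by simpa using hi)]
  simp [hi]

theorem getD_ofDurfeeData_le {i : ℕ} (hi : k ≤ i) : (ofDurfeeData k m l).getD i 0 ≤ k := by
  rw [ofDurfeeData, List.getD_append_right _ _ _ _ (by simpa using hi), List.length_map,
    List.length_range]
  rcases Nat.lt_or_ge (i - k) (belowParts k l).length with h | h
  · rw [List.getD_eq_getElem _ _ h]
    exact (mem_belowParts (List.getElem_mem h)).2
  · rw [List.getD_eq_default _ _ h]
    exact Nat.zero_le _

variable (hm : Antitone m)
include hm

theorem durfee_ofDurfeeData : durfee (ofDurfeeData k m l) = k := by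
  refine eq_of_forall_lt_iff fun i => ?_
  rw [lt_durfee_iff (pairwise_ofDurfeeData hm)]
  rcases Nat.lt_or_ge i k with hi | hi
  · rw [getD_ofDurfeeData hi]
    omega
  · have := getD_ofDurfeeData_le (m := m) (l := l) hi
    omega

theorem rightLen_ofDurfeeData (hmk : m k = 0) : rightLen (ofDurfeeData k m l) = m := by
  funext i
  rw [rightLen, durfee_ofDurfeeData hm]
  rcases Nat.lt_or_ge i k with hi | hi
  · rw [getD_ofDurfeeData hi]
    omega
  · have := getD_ofDurfeeData_le (m := m) (l := l) hi
    have := hm hi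
    omega

variable (hl : Antitone l) (hlk : l k = 0)
include hl hlk

omit hm in
theorem conj_ofDurfeeData {i : ℕ} (hi : i < k) : conj (ofDurfeeData k m l) (i + 1) = k + l i := by
  have hsquare : conj ((List.range k).map (fun i => k + m i)) (i + 1) = k := by
    rw [conj_eq_length fun x hx => ?_, List.length_map, List.length_range]
    obtain ⟨j, -, rfl⟩ := List.mem_map.1 hx
    omega
  rw [ofDurfeeData, conj_append, hsquare, conj_belowParts hl hi.le, hlk, Nat.sub_zero]

theorem belowLen_ofDurfeeData : belowLen (ofDurfeeData k m l) = l := by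
  funext i
  rw [belowLen]
  rcases Nat.lt_or_ge i k with hi | hi
  · rw [conj_ofDurfeeData hl hlk hi, durfee_ofDurfeeData hm]
    omega
  · have := conj_le_durfee (pairwise_ofDurfeeData (l := l) hm)
      (show durfee (ofDurfeeData k m l) < i + 1 by rw [durfee_ofDurfeeData hm]; omega)
    have := hl hi
    omega

omit hm in
theorem sum_ofDurfeeData :
    (ofDurfeeData k m l).sum = k * k + ∑ i ∈ Finset.range k, (m i + l i) := by
  have hbelow := sum_belowParts hl (k := k)
  have hsquare : ((List.range k).map (fun i => k + m i)).sum = ∑ i ∈ Finset.range k, (k + m i) := by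
    rw [Finset.sum_eq_multiset_sum, Finset.range_val, Multiset.range, Multiset.map_coe,
      Multiset.sum_coe]
  rw [hlk, mul_zero, add_zero] at hbelow
  rw [ofDurfeeData, List.sum_append, hsquare, hbelow, Finset.sum_add_distrib,
    Finset.sum_add_distrib, Finset.sum_const, Finset.card_range, smul_eq_mul, add_assoc]

end Build

section Reconstruction

variable {L : List ℕ} (hs : L.Pairwise (· ≥ ·))
include hs

theorem take_durfee_eq :
    L.take (durfee L) = (List.range (durfee L)).map (durfee L + rightLen L ·) := by
  have hk : durfee L ≤ L.length := by
    by_contra! h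
    have := (lt_durfee_iff hs).1 h
    rw [List.getD_eq_default _ _ le_rfl] at this
    omega
  refine List.ext_getElem (by simp [hk]) fun i h₁ h₂ => ?_
  have hi : i < durfee L := by simpa using h₂
  rw [List.getElem_take, List.getElem_map, List.getElem_range,
    ← getD_eq_durfee_add_rightLen hs hi, List.getD_eq_getElem]

theorem le_durfee_of_mem_drop {x : ℕ} (hx : x ∈ L.drop (durfee L)) : x ≤ durfee L := by
  obtain ⟨i, hi, rfl⟩ := List.mem_iff_getElem.1 hx
  rw [List.getElem_drop, ← List.getD_eq_getElem _ 0]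
  exact getD_le_durfee hs (Nat.le_add_right _ _)

theorem drop_durfee_eq (hpos : ∀ x ∈ L, 0 < x) :
    L.drop (durfee L) = belowParts (durfee L) (belowLen L) := by
  refine eq_of_conj_eq (hs.sublist (List.drop_sublist _ _)) pairwise_belowParts
    (fun x hx => hpos x (List.mem_of_mem_drop hx)) (fun x hx => (mem_belowParts hx).1)
    fun c hc => ?_
  obtain ⟨j, rfl⟩ : ∃ j, c = j + 1 := ⟨c - 1, by omega⟩
  rcases Nat.lt_or_ge j (durfee L) with hj | hj
  · have hsplit := conj_append (L.take (durfee L)) (L.drop (durfee L)) (j + 1)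
    rw [List.take_append_drop, conj_eq_durfee_add_belowLen hs hj, take_durfee_eq hs,
      conj_eq_length fun x hx => ?_, List.length_map, List.length_range] at hsplit
    · rw [conj_belowParts (belowLen_antitone L) hj.le, belowLen_durfee hs]
      omega
    · obtain ⟨i, -, rfl⟩ := List.mem_map.1 hx
      omega
  · rw [conj_eq_zero fun x hx => ?_, conj_eq_zero fun x hx => ?_]
    · have := (mem_belowParts hx).2
      omega
    · have := le_durfee_of_mem_drop hs hx
      omega

theorem ofDurfeeData_eq (hpos : ∀ x ∈ L, 0 < x) :
    ofDurfeeData (durfee L) (rightLen L) (belowLen L) = L := by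
  rw [ofDurfeeData, ← take_durfee_eq hs, ← drop_durfee_eq hs hpos, List.take_append_drop]

theorem sum_eq_durfee_data (hpos : ∀ x ∈ L, 0 < x) :
    L.sum = durfee L * durfee L + ∑ i ∈ Finset.range (durfee L), (rightLen L i + belowLen L i) := by
  conv_lhs => rw [← ofDurfeeData_eq hs hpos]
  exact sum_ofDurfeeData (belowLen_antitone L) (belowLen_durfee hs)

theorem exists_conj_eq_iff {i : ℕ} (hi : i < durfee L) :
    (∃ c, durfee L < c ∧ conj L c = i + 1) ↔ rightLen L (i + 1) < rightLen L i := by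
  have hrow := getD_eq_durfee_add_rightLen hs hi
  constructor
  · rintro ⟨c, hc, hconj⟩
    have h₁ := (lt_conj_iff hs (c := c) (i := i) (by omega)).1 (by omega)
    have h₂ := (lt_conj_iff hs (c := c) (i := i + 1) (by omega)).not.1 (by omega)
    rw [rightLen, rightLen]
    omega
  · intro hlt
    refine ⟨L.getD i 0, by rw [hrow]; unfold rightLen at hlt; omega, ?_⟩
    refine eq_of_forall_lt_iff fun j => ?_
    rw [lt_conj_iff hs (by omega)]
    constructor
    · intro h
      by_contra! hj
      have := getD_le_getD hs hj
      rw [rightLen, rightLen] at hlt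
      omega
    · intro h
      exact getD_le_getD hs (by omega)

theorem succ_mem_drop_durfee_iff (hpos : ∀ x ∈ L, 0 < x) {i : ℕ} :
    i + 1 ∈ L.drop (durfee L) ↔ i < durfee L ∧ belowLen L (i + 1) < belowLen L i := by
  rw [drop_durfee_eq hs hpos, succ_mem_belowParts_iff (belowLen_antitone L)]

end Reconstruction

section Partitions

variable {n : ℕ}

theorem sparts_pairwise (π : n.Partition) : (sparts π).Pairwise (· ≥ ·) :=
  Multiset.pairwise_sort _ _

theorem pos_of_mem_sparts (π : n.Partition) : ∀ x ∈ sparts π, 0 < x :=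
  fun _ hx => π.parts_pos ((Multiset.mem_sort _).1 hx)

theorem sum_sparts (π : n.Partition) : (sparts π).sum = n := by
  rw [← Multiset.sum_coe, sparts, Multiset.sort_eq, π.parts_sum]

def partitionOfList (L : List ℕ) (hpos : ∀ x ∈ L, 0 < x) (hsum : L.sum = n) : n.Partition :=
  ⟨L, fun hx => hpos _ hx, by rw [Multiset.sum_coe, hsum]⟩

theorem sparts_partitionOfList {L : List ℕ} (hs : L.Pairwise (· ≥ ·)) (hpos : ∀ x ∈ L, 0 < x)
    (hsum : L.sum = n) : sparts (partitionOfList L hpos hsum) = L :=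
  (Multiset.coe_eq_coe.1 (Multiset.sort_eq _ _)).eq_of_pairwise' (sparts_pairwise _) hs

theorem durfee_pos (π : n.Partition) (hn : 0 < n) : 0 < durfee (sparts π) := by
  have hne : sparts π ≠ [] := fun h => by
    have := sum_sparts π
    rw [h, List.sum_nil] at this
    omega
  obtain ⟨a, L, hL⟩ := List.exists_cons_of_ne_nil hne
  have ha : 0 < a := pos_of_mem_sparts π a (by simp [hL])
  rw [lt_durfee_iff (sparts_pairwise π), hL, List.getD_cons_zero]
  exact ha

end Partitions

section DecrementUpTo

def decrementUpTo (f : ℕ → ℕ) (j : ℕ) (i : ℕ) : ℕ := if i ≤ j then f i - 1 else f i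

variable {f : ℕ → ℕ} {j : ℕ}

theorem antitone_decrementUpTo (hf : Antitone f) (hj : f (j + 1) < f j) :
    Antitone (decrementUpTo f j) := by
  intro a b hab
  have := hf hab
  unfold decrementUpTo
  split_ifs with hb ha ha
  · omega
  · omega
  · have := hf (show a ≤ j by omega)
    have := hf (show j + 1 ≤ b by omega)
    omega
  · exact this

theorem cast_decrementUpTo (hf : Antitone f) (hj : f (j + 1) < f j) (i : ℕ) :
    (decrementUpTo f j i : ℤ) = f i - if i ≤ j then 1 else 0 := by
  unfold decrementUpTo
  split_ifs with hi
  · have := hf hi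
    omega
  · simp

theorem sum_decrementUpTo (hf : Antitone f) (hj : f (j + 1) < f j) {k : ℕ} (hjk : j < k) :
    ∑ i ∈ Finset.range k, decrementUpTo f j i + (j + 1) = ∑ i ∈ Finset.range k, f i := by
  have hcard : ((Finset.range k).filter (· ≤ j)).card = j + 1 := by
    rw [show (Finset.range k).filter (· ≤ j) = Finset.range (j + 1) by
      ext; simp only [Finset.mem_filter, Finset.mem_range]; omega,
      Finset.card_range]
  zify
  simp only [cast_decrementUpTo hf hj, Finset.sum_sub_distrib, Finset.sum_boole, hcard]
  push_cast
  ring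

end DecrementUpTo

section Basis

variable {n : ℕ}

theorem ranks_eq_iff {L L' : List ℕ} (hs : L.Pairwise (· ≥ ·)) (hs' : L'.Pairwise (· ≥ ·)) :
    ranks L' = ranks L ↔ durfee L' = durfee L ∧ ∀ i < durfee L,
      (rightLen L' i : ℤ) - belowLen L' i = (rightLen L i : ℤ) - belowLen L i := by
  rw [ranks_eq hs, ranks_eq hs']
  constructor
  · intro h
    have hk : durfee L' = durfee L := by simpa using congrArg List.length h
    rw [hk, List.map_inj_left] at h
    exact ⟨hk, fun i hi => h i (List.mem_range.2 hi)⟩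
  · rintro ⟨hk, h⟩
    rw [hk, List.map_inj_left]
    exact fun i hi => h i (List.mem_range.1 hi)

/-- The rows and columns beside the Durfee square of `L'` are at least as long as those of `L`,
by downward induction on the index. -/
theorem sum_le_of_ranks_eq {L L' : List ℕ} (hs : L.Pairwise (· ≥ ·)) (hs' : L'.Pairwise (· ≥ ·))
    (hpos : ∀ x ∈ L, 0 < x) (hpos' : ∀ x ∈ L', 0 < x)
    (h : ∀ i < durfee L, ¬(rightLen L (i + 1) < rightLen L i ∧ belowLen L (i + 1) < belowLen L i))
    (hr : ranks L' = ranks L) : L.sum ≤ L'.sum := by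
  obtain ⟨hk, hrank⟩ := (ranks_eq_iff hs hs').1 hr
  have hvanish : ∀ i, durfee L ≤ i → rightLen L i = 0 ∧ belowLen L i = 0 := fun i hi =>
    ⟨Nat.eq_zero_of_le_zero ((rightLen_antitone hs hi).trans (rightLen_durfee hs).le),
      Nat.eq_zero_of_le_zero ((belowLen_antitone L hi).trans (belowLen_durfee hs).le)⟩
  have hdom : ∀ t i, durfee L ≤ i + t →
      rightLen L i ≤ rightLen L' i ∧ belowLen L i ≤ belowLen L' i := by
    intro t
    induction t with
    | zero => intro i hi; simp [hvanish i hi]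
    | succ t ih =>
      intro i hi
      by_cases hik : durfee L ≤ i
      · simp [hvanish i hik]
      · have := ih (i + 1) (by omega)
        have := hrank i (by omega)
        have := h i (by omega)
        have : rightLen L' (i + 1) ≤ rightLen L' i := rightLen_antitone hs' i.le_succ
        have : belowLen L' (i + 1) ≤ belowLen L' i := belowLen_antitone L' i.le_succ
        omega
  have hsum := Finset.sum_le_sum fun i (_ : i ∈ Finset.range (durfee L)) =>
    add_le_add (hdom (durfee L) i (by omega)).1 (hdom (durfee L) i (by omega)).2
  rw [sum_eq_durfee_data hs hpos, sum_eq_durfee_data hs' hpos', hk]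
  omega

/-- The witness shortens every row and column up to index `j` by one, which keeps the ranks. -/
theorem exists_ranks_eq_of_and {L : List ℕ} (hs : L.Pairwise (· ≥ ·)) (hpos : ∀ x ∈ L, 0 < x)
    {j : ℕ} (hj : j < durfee L) (hm : rightLen L (j + 1) < rightLen L j)
    (hl : belowLen L (j + 1) < belowLen L j) :
    ∃ L', L'.Pairwise (· ≥ ·) ∧ (∀ x ∈ L', 0 < x) ∧ ranks L' = ranks L ∧ L'.sum < L.sum := by
  have hmA := rightLen_antitone hs
  have hlA := belowLen_antitone L
  have hm'A := antitone_decrementUpTo hmA hm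
  have hl'A := antitone_decrementUpTo hlA hl
  have hm'k : decrementUpTo (rightLen L) j (durfee L) = 0 := by
    simp [decrementUpTo, show ¬durfee L ≤ j by omega, rightLen_durfee hs]
  have hl'k : decrementUpTo (belowLen L) j (durfee L) = 0 := by
    simp [decrementUpTo, show ¬durfee L ≤ j by omega, belowLen_durfee hs]
  have hs' := pairwise_ofDurfeeData (k := durfee L) (l := decrementUpTo (belowLen L) j) hm'A
  refine ⟨_, hs', fun _ => pos_of_mem_ofDurfeeData, ?_, ?_⟩
  · rw [ranks_eq_iff hs hs', durfee_ofDurfeeData hm'A, rightLen_ofDurfeeData hm'A hm'k,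
      belowLen_ofDurfeeData hm'A hl'A hl'k]
    refine ⟨rfl, fun i _ => ?_⟩
    rw [cast_decrementUpTo hmA hm, cast_decrementUpTo hlA hl]
    ring
  · have := sum_decrementUpTo hmA hm hj
    have := sum_decrementUpTo hlA hl hj
    rw [sum_ofDurfeeData hl'A hl'k, Finset.sum_add_distrib, sum_eq_durfee_data hs hpos,
      Finset.sum_add_distrib]
    omega

theorem isBasis_iff (π : n.Partition) :
    IsBasis π ↔ ∀ i < durfee (sparts π), ¬(rightLen (sparts π) (i + 1) < rightLen (sparts π) i ∧
      belowLen (sparts π) (i + 1) < belowLen (sparts π) i) := by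
  have hs := sparts_pairwise π
  have hpos := pos_of_mem_sparts π
  constructor
  · rintro hb j hj ⟨hm, hl⟩
    obtain ⟨L', hs', hpos', hr, hlt⟩ := exists_ranks_eq_of_and hs hpos hj hm hl
    have := hb _ (partitionOfList L' hpos' rfl) (by rw [sparts_partitionOfList hs', hr])
    rw [sum_sparts] at hlt
    omega
  · intro h m π' hr
    rw [← sum_sparts π, ← sum_sparts π']
    exact sum_le_of_ranks_eq hs (sparts_pairwise π') hpos (pos_of_mem_sparts π') h hr

theorem isComplete_iff (π : n.Partition) :
    IsComplete π ↔ ∀ i, i + 1 < durfee (sparts π) →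
      rightLen (sparts π) (i + 1) < rightLen (sparts π) i ∨
        belowLen (sparts π) (i + 1) < belowLen (sparts π) i := by
  have hs := sparts_pairwise π
  have hpos := pos_of_mem_sparts π
  constructor
  · intro hc i hi
    rcases hc (i + 1) (by omega) hi with h | h
    · exact Or.inr ((succ_mem_drop_durfee_iff hs hpos).1 h).2
    · exact Or.inl ((exists_conj_eq_iff hs (by omega)).1 h)
  · intro hc j hj₁ hj
    obtain ⟨i, rfl⟩ : ∃ i, j = i + 1 := ⟨j - 1, by omega⟩
    rcases hc i hj with h | h
    · exact Or.inr ((exists_conj_eq_iff hs (by omega)).2 h)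
    · exact Or.inl ((succ_mem_drop_durfee_iff hs hpos).2 ⟨by omega, h⟩)

theorem sig_eq_card (π : n.Partition) :
    sig (sparts π) = ((Finset.range (durfee (sparts π))).filter
      fun i => belowLen (sparts π) (i + 1) < belowLen (sparts π) i).card := by
  have hs := sparts_pairwise π
  have hpos := pos_of_mem_sparts π
  rw [sig, ← List.card_toFinset,
    ← Finset.card_image_of_injective (Finset.filter _ (Finset.range _)) (add_left_injective 1)]
  congr 1
  ext x
  simp only [List.mem_toFinset, Finset.mem_image, Finset.mem_filter, Finset.mem_range]
  rcases x with _ | i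
  · exact ⟨fun h => absurd (hpos 0 (List.mem_of_mem_drop h)) (lt_irrefl 0), by omega⟩
  · simp only [succ_mem_drop_durfee_iff hs hpos, add_left_inj, exists_eq_right]

end Basis

section SwapHead

def swapHead (m l : ℕ → ℕ) : ℕ → ℕ := Function.update m 0 (m 1 + (l 0 - l 1))

variable {m l : ℕ → ℕ}

@[simp]
theorem swapHead_succ (i : ℕ) : swapHead m l (i + 1) = m (i + 1) :=
  Function.update_of_ne i.succ_ne_zero _ _

theorem swapHead_one_lt_zero_iff : swapHead m l 1 < swapHead m l 0 ↔ l 1 < l 0 := by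
  simp only [swapHead, Function.update_self, Function.update_of_ne one_ne_zero]
  omega

theorem antitone_swapHead (hm : Antitone m) : Antitone (swapHead m l) := by
  refine antitone_nat_of_succ_le fun i => ?_
  rcases i with _ | i
  · simp only [zero_add, swapHead, Function.update_self, Function.update_of_ne one_ne_zero]
    omega
  · simpa only [swapHead_succ] using hm (i + 1).le_succ

variable (hm : Antitone m)
include hm

theorem swapHead_eq_zero {k : ℕ} (hmk : m k = 0) (hlk : l k = 0) : swapHead m l k = 0 := by
  rcases k with _ | k
  · have := hm (Nat.zero_le 1)
    simp only [swapHead, Function.update_self]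
    omega
  · rwa [swapHead_succ]

theorem swapHead_swapHead : swapHead (swapHead m l) (swapHead l m) = m := by
  have := hm (Nat.zero_le 1)
  funext i
  rcases i with _ | i
  · simp only [swapHead, Function.update_self, Function.update_of_ne one_ne_zero]
    omega
  · simp only [swapHead_succ]

theorem swapHead_add_swapHead (hl : Antitone l) (i : ℕ) :
    swapHead m l i + swapHead l m i = m i + l i := by
  have := hm (Nat.zero_le 1)
  have := hl (Nat.zero_le 1)
  rcases i with _ | i
  · simp only [swapHead, Function.update_self]
    omega
  · rw [swapHead_succ, swapHead_succ]

end SwapHead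

/-- Exchanges the parts equal to `1` of `π_r` and of `π_b`. -/
def swapOnes (L : List ℕ) : List ℕ :=
  ofDurfeeData (durfee L) (swapHead (rightLen L) (belowLen L)) (swapHead (belowLen L) (rightLen L))

section SwapOnes

variable {L : List ℕ} (hs : L.Pairwise (· ≥ ·))
include hs

theorem pairwise_swapOnes : (swapOnes L).Pairwise (· ≥ ·) :=
  pairwise_ofDurfeeData (antitone_swapHead (rightLen_antitone hs))

theorem durfee_swapOnes : durfee (swapOnes L) = durfee L :=
  durfee_ofDurfeeData (antitone_swapHead (rightLen_antitone hs))

theorem rightLen_swapOnes : rightLen (swapOnes L) = swapHead (rightLen L) (belowLen L) :=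
  rightLen_ofDurfeeData (antitone_swapHead (rightLen_antitone hs))
    (swapHead_eq_zero (rightLen_antitone hs) (rightLen_durfee hs) (belowLen_durfee hs))

theorem belowLen_swapOnes : belowLen (swapOnes L) = swapHead (belowLen L) (rightLen L) :=
  belowLen_ofDurfeeData (antitone_swapHead (rightLen_antitone hs))
    (antitone_swapHead (belowLen_antitone L))
    (swapHead_eq_zero (belowLen_antitone L) (belowLen_durfee hs) (rightLen_durfee hs))

variable (hpos : ∀ x ∈ L, 0 < x)
include hpos

theorem swapOnes_swapOnes : swapOnes (swapOnes L) = L := by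
  rw [swapOnes, durfee_swapOnes hs, rightLen_swapOnes hs, belowLen_swapOnes hs,
    swapHead_swapHead (rightLen_antitone hs), swapHead_swapHead (belowLen_antitone L),
    ofDurfeeData_eq hs hpos]

theorem sum_swapOnes : (swapOnes L).sum = L.sum := by
  rw [sum_eq_durfee_data hs hpos, swapOnes,
    sum_ofDurfeeData (antitone_swapHead (belowLen_antitone L))
      (swapHead_eq_zero (belowLen_antitone L) (belowLen_durfee hs) (rightLen_durfee hs))]
  simp only [swapHead_add_swapHead (rightLen_antitone hs) (belowLen_antitone L)]

end SwapOnes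

section SwapPart

variable {n : ℕ}

def swapPart (π : n.Partition) : n.Partition :=
  partitionOfList (swapOnes (sparts π)) (fun _ => pos_of_mem_ofDurfeeData)
    (by rw [sum_swapOnes (sparts_pairwise π) (pos_of_mem_sparts π), sum_sparts])

theorem sparts_swapPart (π : n.Partition) : sparts (swapPart π) = swapOnes (sparts π) :=
  sparts_partitionOfList (pairwise_swapOnes (sparts_pairwise π)) _ _

theorem swapPart_swapPart (π : n.Partition) : swapPart (swapPart π) = π := by
  ext1
  change ((swapOnes (sparts (swapPart π)) : List ℕ) : Multiset ℕ) = π.parts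
  rw [sparts_swapPart, swapOnes_swapOnes (sparts_pairwise π) (pos_of_mem_sparts π), sparts,
    Multiset.sort_eq]

variable {π : n.Partition}

theorem isBasis_swapPart (hb : IsBasis π) : IsBasis (swapPart π) := by
  have hs := sparts_pairwise π
  rw [isBasis_iff] at hb ⊢
  rw [sparts_swapPart, durfee_swapOnes hs, rightLen_swapOnes hs, belowLen_swapOnes hs]
  rintro (_ | i) hi
  · rw [swapHead_one_lt_zero_iff, swapHead_one_lt_zero_iff, and_comm]
    exact hb 0 hi
  · simpa only [swapHead_succ] using hb (i + 1) hi

theorem isComplete_swapPart (hc : IsComplete π) : IsComplete (swapPart π) := by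
  have hs := sparts_pairwise π
  rw [isComplete_iff] at hc ⊢
  rw [sparts_swapPart, durfee_swapOnes hs, rightLen_swapOnes hs, belowLen_swapOnes hs]
  rintro (_ | i) hi
  · rw [swapHead_one_lt_zero_iff, swapHead_one_lt_zero_iff, or_comm]
    exact hc 0 hi
  · simpa only [swapHead_succ] using hc (i + 1) hi

theorem xor_rightLen_lt_belowLen_lt (hb : IsBasis π) (hc : IsComplete π) (hn : 2 ≤ n) :
    Xor (rightLen (sparts π) 1 < rightLen (sparts π) 0)
      (belowLen (sparts π) 1 < belowLen (sparts π) 0) := by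
  have hs := sparts_pairwise π
  have hk := durfee_pos π (by omega)
  rw [xor_iff_or_and_not_and]
  refine ⟨?_, (isBasis_iff π).1 hb 0 hk⟩
  rcases Nat.lt_or_ge 1 (durfee (sparts π)) with hk₂ | hk₁
  · exact (isComplete_iff π).1 hc 0 hk₂
  · obtain hk₁ : durfee (sparts π) = 1 := by omega
    have hsum := sum_eq_durfee_data hs (pos_of_mem_sparts π)
    have hm := rightLen_durfee hs
    have hl := belowLen_durfee hs
    rw [hk₁] at hsum hm hl
    rw [sum_sparts, Finset.sum_range_one] at hsum
    omega

theorem odd_sig_swapPart_add_sig (hb : IsBasis π) (hc : IsComplete π) (hn : 2 ≤ n) :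
    Odd (sig (sparts (swapPart π)) + sig (sparts π)) := by
  have hs := sparts_pairwise π
  obtain ⟨k, hk⟩ := Nat.exists_eq_add_one_of_ne_zero (durfee_pos π (by omega)).ne'
  have hxor := xor_rightLen_lt_belowLen_lt hb hc hn
  rw [sig_eq_card, sig_eq_card, sparts_swapPart, durfee_swapOnes hs, belowLen_swapOnes hs, hk,
    card_filter_range_succ, card_filter_range_succ]
  simp only [zero_add, swapHead_one_lt_zero_iff]
  simp only [swapHead_succ]
  rcases hxor with ⟨h₁, h₂⟩ | ⟨h₁, h₂⟩ <;> simp only [h₁, h₂, if_true, if_false] <;>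
    exact ⟨_, by ring⟩

end SwapPart


theorem statement13 (n : ℕ) (hn : 2 ≤ n) :
    Nat.card {π : n.Partition // IsBasis π ∧ IsComplete π ∧ Even (sig (sparts π))} =
      Nat.card {π : n.Partition // IsBasis π ∧ IsComplete π ∧ Odd (sig (sparts π))} ∧
    Even (bc n) := by
  have hswap := card_even_eq_card_odd_of_involution
    (fun π : n.Partition => IsBasis π ∧ IsComplete π) (fun π => sig (sparts π)) swapPart
    (fun π h => ⟨isBasis_swapPart h.1, isComplete_swapPart h.2⟩)
    (fun π _ => swapPart_swapPart π) (fun π h => odd_sig_swapPart_add_sig h.1 h.2 hn)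
  simp only [and_assoc] at hswap
  refine ⟨hswap, ?_⟩
  rw [bc, card_eq_card_even_add_card_odd _ fun π => sig (sparts π)]
  simp only [and_assoc, hswap]
  exact ⟨_, rfl⟩

end BasisPartitions
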